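/- arXiv:1509.00618 — 2 statements merged into one kernel-verified Lean document; each statement's English description precedes it below -/
import Mathlib

section
/- Let x ⊆ [n]_{j+1} and x̄ ⊆ [n]_{j+2} with j odd. Suppose x and x̄ are well-formed and x̄⁻ ∩ x = ∅. Then x̄ ∪ x∨ is well-formed. -/
/-- `Simplex n j` is the set `[n]_j` of order-preserving injections `[j] ↪ [n]`. -/
abbrev Simplex (n j : ℕ) := Fin (j+1) ↪o Fin (n+1)

/-- The `k`-th face `a ∘ δ_k` of `a ∈ [n]_{j+1}`. -/
def face {n j : ℕ} (a : Simplex n (j+1)) (k : Fin (j+2)) : Simplex n j :=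
  (Fin.succAboveOrderEmb k).trans a

/-- The even faces `a⁺` of `a`. -/
def posFaces {n j : ℕ} (a : Simplex n (j+1)) : Set (Simplex n j) :=
  {b | ∃ k : Fin (j+2), Even (k : ℕ) ∧ b = face a k}

/-- The odd faces `a⁻` of `a`. -/
def negFaces {n j : ℕ} (a : Simplex n (j+1)) : Set (Simplex n j) :=
  {b | ∃ k : Fin (j+2), Odd (k : ℕ) ∧ b = face a k}

def setPos {n j : ℕ} (ξ : Set (Simplex n (j+1))) : Set (Simplex n j) := ⋃ a ∈ ξ, posFaces a
def setNeg {n j : ℕ} (ξ : Set (Simplex n (j+1))) : Set (Simplex n j) := ⋃ a ∈ ξ, negFaces a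

/-- The inclusion `[n]_j ⊆ [n+1]_j`. -/
def liftS {n j : ℕ} (a : Simplex n j) : Simplex (n+1) j :=
  a.trans (OrderEmbedding.ofStrictMono Fin.castSucc Fin.strictMono_castSucc)

/-- `a∨ ∈ [n+1]_{j+1}`: append the new top element `n+1` to `a ∈ [n]_j`. -/
def vee {n j : ℕ} (a : Simplex n j) : Simplex (n+1) (j+1) :=
  OrderEmbedding.ofStrictMono (Fin.snoc (fun i => (a i).castSucc) (Fin.last (n+1))) (by
    intro i k h
    rcases Fin.eq_castSucc_or_eq_last k with ⟨k', rfl⟩ | rfl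
    · rcases Fin.eq_castSucc_or_eq_last i with ⟨i', rfl⟩ | rfl
      · simpa only [Fin.snoc_castSucc] using
          Fin.castSucc_lt_castSucc_iff.mpr (a.strictMono (Fin.castSucc_lt_castSucc_iff.mp h))
      · exact absurd (lt_trans h (Fin.castSucc_lt_last k')) (lt_irrefl _)
    · rcases Fin.eq_castSucc_or_eq_last i with ⟨i', rfl⟩ | rfl
      · simp only [Fin.snoc_castSucc, Fin.snoc_last]
        exact Fin.castSucc_lt_last _
      · exact absurd h (lt_irrefl _))

/-- A subset of `[n]_{j+1}` is well-formed if distinct elements share no even face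
and no odd face. -/
def WellFormed {n j : ℕ} (ξ : Set (Simplex n (j+1))) : Prop :=
  ∀ a ∈ ξ, ∀ b ∈ ξ, a ≠ b →
    posFaces a ∩ posFaces b = ∅ ∧ negFaces a ∩ negFaces b = ∅

/-- `ξ` moves `μ` to `π`. -/
def Moves {n j : ℕ} (ξ : Set (Simplex n (j+1))) (μ π : Set (Simplex n j)) : Prop :=
  π = (μ ∪ setPos ξ) \ setNeg ξ ∧ μ = (π ∪ setNeg ξ) \ setPos ξ

/-!
The faces of `liftS a` are the lifts of the faces of `a`. The faces of `vee a` are the `vee`s of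
the faces of `a`, with the same parity, together with the face `liftS a` opposite the new vertex
`n+1`, whose index `j+2` is odd because `j` is. A lifted simplex never equals a `vee`d one (only
the latter contains `n+1`), so by injectivity of `liftS` and `vee` both parts of the union stay
well-formed, and `liftS a` and `vee c` can only share the odd face `liftS c`, which requires
`c ∈ a⁻`; this is excluded by `x̄⁻ ∩ x = ∅`.
-/

section Faces

variable {n j : ℕ}

lemma liftS_apply (a : Simplex n j) (i : Fin (j+1)) : liftS a i = (a i).castSucc := rfl

lemma vee_castSucc (a : Simplex n j) (i : Fin (j+1)) : vee a i.castSucc = (a i).castSucc :=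
  Fin.snoc_castSucc (α := fun _ => Fin (n+2)) (Fin.last (n+1)) (fun i => (a i).castSucc) i

lemma vee_last (a : Simplex n j) : vee a (Fin.last (j+1)) = Fin.last (n+1) :=
  Fin.snoc_last (α := fun _ => Fin (n+2)) (Fin.last (n+1)) (fun i => (a i).castSucc)

lemma liftS_injective : Function.Injective (liftS (n := n) (j := j)) := fun _ _ h =>
  DFunLike.ext _ _ fun i => Fin.castSucc_injective _ (DFunLike.congr_fun h i)

lemma vee_injective : Function.Injective (vee (n := n) (j := j)) := fun a b h =>
  DFunLike.ext _ _ fun i => Fin.castSucc_injective _ <| by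
    simpa only [vee_castSucc] using DFunLike.congr_fun h i.castSucc

lemma vee_ne_liftS (c : Simplex n j) (d : Simplex n (j+1)) : vee c ≠ liftS d := by
  intro h
  have := DFunLike.congr_fun h (Fin.last (j+1))
  rw [vee_last, liftS_apply] at this
  exact (Fin.castSucc_lt_last _).ne' this

lemma image_liftS_inter_image_vee (S : Set (Simplex n (j+1))) (T : Set (Simplex n j)) :
    liftS '' S ∩ vee '' T = ∅ := by
  rw [Set.eq_empty_iff_forall_notMem]
  rintro _ ⟨⟨d, -, rfl⟩, c, -, h⟩
  exact vee_ne_liftS c d h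

lemma face_apply (a : Simplex n (j+1)) (k : Fin (j+2)) (i : Fin (j+1)) :
    face a k i = a (k.succAbove i) := rfl

lemma face_liftS (a : Simplex n (j+1)) (k : Fin (j+2)) :
    face (liftS a) k = liftS (face a k) := rfl

lemma face_vee_castSucc (a : Simplex n (j+1)) (k : Fin (j+2)) :
    face (vee a) k.castSucc = vee (face a k) := by
  refine DFunLike.ext _ _ fun i => ?_
  induction i using Fin.lastCases with
  | last =>
    rw [face_apply, Fin.succAbove_of_le_castSucc _ _ (Fin.castSucc_le_castSucc_iff.mpr
      (Fin.le_last k)), Fin.succ_last, vee_last, vee_last]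
  | cast i =>
    rw [face_apply, Fin.castSucc_succAbove_castSucc, vee_castSucc, vee_castSucc, face_apply]

lemma face_vee_last (a : Simplex n (j+1)) : face (vee a) (Fin.last (j+2)) = liftS a :=
  DFunLike.ext _ _ fun i => by rw [face_apply, Fin.succAbove_last, vee_castSucc, liftS_apply]

lemma posFaces_liftS (a : Simplex n (j+1)) : posFaces (liftS a) = liftS '' posFaces a := by
  ext b
  constructor
  · rintro ⟨k, hk, rfl⟩
    exact ⟨face a k, ⟨k, hk, rfl⟩, rfl⟩
  · rintro ⟨b, ⟨k, hk, rfl⟩, rfl⟩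
    exact ⟨k, hk, rfl⟩

lemma negFaces_liftS (a : Simplex n (j+1)) : negFaces (liftS a) = liftS '' negFaces a := by
  ext b
  constructor
  · rintro ⟨k, hk, rfl⟩
    exact ⟨face a k, ⟨k, hk, rfl⟩, rfl⟩
  · rintro ⟨b, ⟨k, hk, rfl⟩, rfl⟩
    exact ⟨k, hk, rfl⟩

lemma posFaces_vee (hj : Odd j) (a : Simplex n (j+1)) : posFaces (vee a) = vee '' posFaces a := by
  ext b
  constructor
  · rintro ⟨k, hk, rfl⟩
    induction k using Fin.lastCases with
    | last => simp [Nat.even_add_one, hj] at hk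
    | cast k => exact ⟨face a k, ⟨k, by simpa using hk, rfl⟩, (face_vee_castSucc a k).symm⟩
  · rintro ⟨b, ⟨k, hk, rfl⟩, rfl⟩
    exact ⟨k.castSucc, by simpa using hk, (face_vee_castSucc a k).symm⟩

lemma negFaces_vee (hj : Odd j) (a : Simplex n (j+1)) :
    negFaces (vee a) = insert (liftS a) (vee '' negFaces a) := by
  ext b
  constructor
  · rintro ⟨k, hk, rfl⟩
    induction k using Fin.lastCases with
    | last => exact Or.inl (face_vee_last a)
    | cast k =>
      exact Or.inr ⟨face a k, ⟨k, by simpa using hk, rfl⟩, (face_vee_castSucc a k).symm⟩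
  · rintro (rfl | ⟨b, ⟨k, hk, rfl⟩, rfl⟩)
    · exact ⟨Fin.last (j+2), by simp [Nat.odd_add_one, hj], (face_vee_last a).symm⟩
    · exact ⟨k.castSucc, by simpa using hk, (face_vee_castSucc a k).symm⟩

end Faces

section WellFormed

variable {n j : ℕ}

lemma WellFormed.union {s t : Set (Simplex n (j+1))} (hs : WellFormed s) (ht : WellFormed t)
    (hst : ∀ a ∈ s, ∀ b ∈ t,
      posFaces a ∩ posFaces b = ∅ ∧ negFaces a ∩ negFaces b = ∅) :
    WellFormed (s ∪ t) := by
  rintro a (ha | ha) b (hb | hb) hab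
  · exact hs a ha b hb hab
  · exact hst a ha b hb
  · rw [Set.inter_comm, Set.inter_comm (negFaces a)]
    exact hst b hb a ha
  · exact ht a ha b hb hab

lemma WellFormed.image_liftS {ξ : Set (Simplex n (j+1))} (h : WellFormed ξ) :
    WellFormed (liftS '' ξ) := by
  rintro _ ⟨a, ha, rfl⟩ _ ⟨b, hb, rfl⟩ hab
  obtain ⟨hpos, hneg⟩ := h a ha b hb (ne_of_apply_ne _ hab)
  rw [posFaces_liftS, posFaces_liftS, negFaces_liftS, negFaces_liftS,
    ← Set.image_inter liftS_injective, ← Set.image_inter liftS_injective, hpos, hneg]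
  simp

lemma WellFormed.image_vee (hj : Odd j) {x : Set (Simplex n (j+1))} (h : WellFormed x) :
    WellFormed (vee '' x) := by
  rintro _ ⟨a, ha, rfl⟩ _ ⟨b, hb, rfl⟩ hab
  have hab' : a ≠ b := ne_of_apply_ne _ hab
  obtain ⟨hpos, hneg⟩ := h a ha b hb hab'
  refine ⟨?_, ?_⟩
  · rw [posFaces_vee hj, posFaces_vee hj, ← Set.image_inter vee_injective, hpos, Set.image_empty]
  · rw [negFaces_vee hj, negFaces_vee hj, Set.eq_empty_iff_forall_notMem]
    rintro _ ⟨rfl | ⟨c, hca, rfl⟩, h | ⟨d, hdb, h⟩⟩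
    · exact hab' (liftS_injective h)
    · exact vee_ne_liftS d a h
    · exact vee_ne_liftS c b h
    · rw [vee_injective h] at hdb
      exact (Set.eq_empty_iff_forall_notMem.mp hneg) c ⟨hca, hdb⟩

lemma faces_liftS_inter_faces_vee_eq_empty (hj : Odd j) {a : Simplex n (j+2)}
    {c : Simplex n (j+1)} (hc : c ∉ negFaces a) :
    posFaces (liftS a) ∩ posFaces (vee c) = ∅ ∧
      negFaces (liftS a) ∩ negFaces (vee c) = ∅ := by
  refine ⟨?_, ?_⟩
  · rw [posFaces_liftS, posFaces_vee hj]
    exact image_liftS_inter_image_vee _ _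
  · rw [negFaces_liftS, negFaces_vee hj, Set.inter_insert_of_notMem,
      image_liftS_inter_image_vee]
    rintro ⟨d, hd, hdc⟩
    exact hc (liftS_injective hdc ▸ hd)

end WellFormed

/-- If `x` and `x̄` are well-formed and `x̄⁻ ∩ x = ∅`, then `x̄ ∪ x∨` is
well-formed (for `j` odd). -/
theorem union_wf_of_wf (n j : ℕ) (hj : Odd j)
    (x : Set (Simplex n (j+1))) (xb : Set (Simplex n (j+2)))
    (hx : WellFormed x) (hxb : WellFormed xb)
    (hd : setNeg xb ∩ x = ∅) :
    WellFormed (liftS '' xb ∪ vee '' x) := by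
  refine hxb.image_liftS.union (hx.image_vee hj) ?_
  rintro _ ⟨a, ha, rfl⟩ _ ⟨c, hc, rfl⟩
  refine faces_liftS_inter_faces_vee_eq_empty hj fun hca => ?_
  have hmem : c ∈ setNeg xb ∩ x := ⟨Set.mem_biUnion ha hca, hc⟩
  rw [hd] at hmem
  exact hmem
end

section
/- If ξ ⊆ [n]_1 is a well-formed subset moving i to j with i ≠ j (where i, j ∈ {0,...,n}), then i occurs exactly once in ξ, as an odd face; j occurs exactly once, as an even face; and every other value of {0,...,n} occurring in ξ occurs exactly twice, once as an even and once as an odd face. Consequently ξ determines a strictly increasing chain i = k_0 < k_1 < ... < k_r = j with ξ = {(k_0 k_1),...,(k_{r-1} k_r)}. -/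
/-- The even faces of a set of edges: the set of second entries. -/
def ePos {n : ℕ} (ξ : Set (Fin (n+1) × Fin (n+1))) : Set (Fin (n+1)) := Prod.snd '' ξ

/-- The odd faces of a set of edges: the set of first entries. -/
def eNeg {n : ℕ} (ξ : Set (Fin (n+1) × Fin (n+1))) : Set (Fin (n+1)) := Prod.fst '' ξ

/-- Well-formedness: distinct edges share no even face and no odd face. -/
def EWf {n : ℕ} (ξ : Set (Fin (n+1) × Fin (n+1))) : Prop :=
  ∀ p ∈ ξ, ∀ q ∈ ξ, p ≠ q → p.2 ≠ q.2 ∧ p.1 ≠ q.1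

/-- `ξ` moves `i` to `j`. -/
def EMoves {n : ℕ} (ξ : Set (Fin (n+1) × Fin (n+1))) (i j : Fin (n+1)) : Prop :=
  ({j} : Set (Fin (n+1))) = ({i} ∪ ePos ξ) \ eNeg ξ ∧
  ({i} : Set (Fin (n+1))) = ({j} ∪ eNeg ξ) \ ePos ξ

/-- `ξ` is a 1-cell `i → j` of the oriental `𝒪(n)`. -/
def IsOneCell {n : ℕ} (ξ : Set (Fin (n+1) × Fin (n+1))) (i j : Fin (n+1)) : Prop :=
  (∀ p ∈ ξ, p.1 < p.2) ∧ EWf ξ ∧ EMoves ξ i j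


/-!
For `i ∉ ePos ξ` and `j ∉ eNeg ξ`, "ξ moves `i` to `j`" is the balance condition
`{i} ∪ ξ⁺ = {j} ∪ ξ⁻`, from which the occurrence counts are read off directly, well-formedness
giving uniqueness. Removing the edge `(i, b)` out of `i` keeps the balance with `i` replaced by
`b`, so induction on `|ξ|` produces the chain. It stops at `i = j`, where `ξ⁺ = ξ⁻` forces
`ξ = ∅`: the least odd face of a nonempty set of increasing edges is not an even face.
-/

variable {n : ℕ} {ξ : Set (Fin (n+1) × Fin (n+1))} {i j v : Fin (n+1)}

theorem eMoves_iff :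
    EMoves ξ i j ↔ i ∉ ePos ξ ∧ j ∉ eNeg ξ ∧ insert i (ePos ξ) = insert j (eNeg ξ) := by
  simp only [EMoves, Set.ext_iff, Set.mem_singleton_iff, Set.mem_sdiff, Set.mem_union,
    Set.mem_insert_iff]
  grind

theorem EMoves.mem_eNeg_left (hmv : EMoves ξ i j) (hij : i ≠ j) : i ∈ eNeg ξ := by
  have hi : i ∈ insert j (eNeg ξ) := (eMoves_iff.1 hmv).2.2 ▸ Set.mem_insert i _
  exact hi.resolve_left hij

theorem EMoves.mem_ePos_right (hmv : EMoves ξ i j) (hij : i ≠ j) : j ∈ ePos ξ := by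
  have hj : j ∈ insert i (ePos ξ) := (eMoves_iff.1 hmv).2.2 ▸ Set.mem_insert j _
  exact hj.resolve_left hij.symm

theorem EMoves.mem_ePos_iff_mem_eNeg (hmv : EMoves ξ i j) (hvi : v ≠ i) (hvj : v ≠ j) :
    v ∈ ePos ξ ↔ v ∈ eNeg ξ := by
  simpa [hvi, hvj] using Set.ext_iff.1 (eMoves_iff.1 hmv).2.2 v

theorem eq_empty_of_ePos_eq_eNeg (hlt : ∀ p ∈ ξ, p.1 < p.2) (h : ePos ξ = eNeg ξ) : ξ = ∅ := by
  by_contra hne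
  obtain ⟨a, ha, hmin⟩ :=
    Set.exists_min_image ξ Prod.fst ξ.toFinite (Set.nonempty_iff_ne_empty.2 hne)
  obtain ⟨p, hp, hpa⟩ : a.1 ∈ ePos ξ := h ▸ ⟨a, ha, rfl⟩
  exact (hmin p hp).not_gt (hpa ▸ hlt p hp)

theorem EMoves.eq_empty_of_self (hlt : ∀ p ∈ ξ, p.1 < p.2) (hmv : EMoves ξ j j) : ξ = ∅ := by
  obtain ⟨hjP, hjN, hbal⟩ := eMoves_iff.1 hmv
  refine eq_empty_of_ePos_eq_eNeg hlt ?_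
  rw [← Set.insert_sdiff_self_of_notMem hjP, hbal, Set.insert_sdiff_self_of_notMem hjN]

theorem EWf.injOn_fst (h : EWf ξ) : Set.InjOn Prod.fst ξ :=
  fun p hp q hq hpq => by_contra fun hne => (h p hp q hq hne).2 hpq

theorem EWf.injOn_snd (h : EWf ξ) : Set.InjOn Prod.snd ξ :=
  fun p hp q hq hpq => by_contra fun hne => (h p hp q hq hne).1 hpq

theorem EWf.mono {ζ : Set (Fin (n+1) × Fin (n+1))} (h : EWf ξ) (hζ : ζ ⊆ ξ) : EWf ζ :=
  fun p hp q hq => h p (hζ hp) q (hζ hq)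

theorem EWf.existsUnique_fst (h : EWf ξ) (hv : v ∈ eNeg ξ) : ∃! p, p ∈ ξ ∧ p.1 = v := by
  obtain ⟨p, hp, rfl⟩ := hv
  exact ⟨p, ⟨hp, rfl⟩, fun q hq => h.injOn_fst hq.1 hp hq.2⟩

theorem EWf.existsUnique_snd (h : EWf ξ) (hv : v ∈ ePos ξ) : ∃! p, p ∈ ξ ∧ p.2 = v := by
  obtain ⟨p, hp, rfl⟩ := hv
  exact ⟨p, ⟨hp, rfl⟩, fun q hq => h.injOn_snd hq.1 hp hq.2⟩

theorem EWf.ePos_sdiff_singleton {e : Fin (n+1) × Fin (n+1)} (h : EWf ξ) (he : e ∈ ξ) :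
    ePos (ξ \ {e}) = ePos ξ \ {e.2} := by
  rw [ePos, h.injOn_snd.image_sdiff, Set.inter_singleton_of_mem he, Set.image_singleton]
  rfl

theorem EWf.eNeg_sdiff_singleton {e : Fin (n+1) × Fin (n+1)} (h : EWf ξ) (he : e ∈ ξ) :
    eNeg (ξ \ {e}) = eNeg ξ \ {e.1} := by
  rw [eNeg, h.injOn_fst.image_sdiff, Set.inter_singleton_of_mem he, Set.image_singleton]
  rfl

theorem IsOneCell.sdiff_singleton {e : Fin (n+1) × Fin (n+1)} (h : IsOneCell ξ e.1 j)
    (he : e ∈ ξ) (hej : e.1 ≠ j) : IsOneCell (ξ \ {e}) e.2 j := by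
  obtain ⟨hlt, hwf, hmv⟩ := h
  obtain ⟨hiP, hjN, hbal⟩ := eMoves_iff.1 hmv
  refine ⟨fun p hp => hlt p hp.1, hwf.mono Set.sdiff_subset, eMoves_iff.2 ?_⟩
  rw [hwf.ePos_sdiff_singleton he, hwf.eNeg_sdiff_singleton he]
  refine ⟨fun hb => hb.2 rfl, fun hjN' => hjN hjN'.1, ?_⟩
  have heP : e.2 ∈ ePos ξ := ⟨e, he, rfl⟩
  have hje : j ∉ ({e.1} : Set (Fin (n+1))) := hej.symm
  rw [Set.insert_sdiff_self_of_mem heP, ← Set.insert_sdiff_of_notMem _ hje, ← hbal,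
    Set.insert_sdiff_self_of_notMem hiP]

def pathEdges {α : Type*} {r : ℕ} (k : Fin (r+1) → α) : Set (α × α) :=
  Set.range fun t : Fin r => (k t.castSucc, k t.succ)

theorem pathEdges_cons {α : Type*} {r : ℕ} (a : α) (k : Fin (r+1) → α) :
    pathEdges (Fin.cons a k) = insert (a, k 0) (pathEdges k) := by
  rw [pathEdges, pathEdges, ← Fin.range_cons]
  congr 1
  ext t : 1
  cases t using Fin.cases <;> simp

theorem IsOneCell.exists_chain {ξ : Set (Fin (n+1) × Fin (n+1))} {i j : Fin (n+1)}
    (h : IsOneCell ξ i j) :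
    ∃ (r : ℕ) (k : Fin (r+1) → Fin (n+1)), StrictMono k ∧ k 0 = i ∧ k (Fin.last r) = j ∧
      ξ = pathEdges k := by
  by_cases hij : i = j
  · subst hij
    refine ⟨0, ![i], Subsingleton.strictMono (α := Fin 1) _, rfl, rfl, ?_⟩
    rw [h.2.2.eq_empty_of_self h.1, pathEdges, Set.range_eq_empty]
  · obtain ⟨e, he, rfl⟩ := h.2.2.mem_eNeg_left hij
    obtain ⟨r, k, hk, hk0, hkr, htail⟩ := exists_chain (h.sdiff_singleton he hij)
    refine ⟨r + 1, Fin.cons e.1 k, Fin.strictMono_cons.2 ⟨fun t => ?_, hk⟩, rfl, ?_, ?_⟩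
    · calc e.1 < e.2 := h.1 e he
        _ = k 0 := hk0.symm
        _ ≤ k t := hk.monotone (Fin.zero_le t)
    · rwa [← Fin.succ_last, Fin.cons_succ]
    · rw [pathEdges_cons, hk0, ← htail, Set.insert_sdiff_singleton, Set.insert_eq_of_mem he]
termination_by ξ.ncard
decreasing_by exact Set.ncard_sdiff_singleton_lt_of_mem he

/-- For a 1-cell `ξ : i → j` with `i ≠ j`: `i` occurs exactly once in `ξ`,
as an odd face (first entry); `j` occurs exactly once, as an even face
(second entry); every other occurring value occurs exactly once as a first
entry and exactly once as a second entry; consequently `ξ` is a strictly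
increasing chain from `i` to `j`. -/
theorem oriental_one_cell_occurrences (n : ℕ) (i j : Fin (n+1)) (hij : i ≠ j)
    (ξ : Set (Fin (n+1) × Fin (n+1))) (hsub : ∀ p ∈ ξ, p.1 < p.2)
    (hwf : EWf ξ) (hmv : EMoves ξ i j) :
    (∃! p, p ∈ ξ ∧ p.1 = i) ∧ (∀ p ∈ ξ, p.2 ≠ i) ∧
    (∃! p, p ∈ ξ ∧ p.2 = j) ∧ (∀ p ∈ ξ, p.1 ≠ j) ∧
    (∀ v : Fin (n+1), v ≠ i → v ≠ j → v ∈ eNeg ξ ∪ ePos ξ →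
      (∃! p, p ∈ ξ ∧ p.1 = v) ∧ (∃! p, p ∈ ξ ∧ p.2 = v)) ∧
    (∃ (r : ℕ) (k : Fin (r+2) → Fin (n+1)), StrictMono k ∧
      k 0 = i ∧ k (Fin.last (r+1)) = j ∧
      ξ = ⋃ t : Fin (r+1), {(k t.castSucc, k t.succ)}) := by
  obtain ⟨hiP, hjN, -⟩ := eMoves_iff.1 hmv
  refine ⟨hwf.existsUnique_fst (hmv.mem_eNeg_left hij), fun p hp h => hiP ⟨p, hp, h⟩,
    hwf.existsUnique_snd (hmv.mem_ePos_right hij), fun p hp h => hjN ⟨p, hp, h⟩,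
    fun v hvi hvj hv => ?_, ?_⟩
  · have hPN := hmv.mem_ePos_iff_mem_eNeg hvi hvj
    exact ⟨hwf.existsUnique_fst (hv.elim id hPN.1), hwf.existsUnique_snd (hv.elim hPN.2 id)⟩
  · obtain ⟨_ | r, k, hk, hk0, hkr, hξ⟩ := IsOneCell.exists_chain ⟨hsub, hwf, hmv⟩
    · exact absurd (hk0.symm.trans hkr) hij
    · exact ⟨r, k, hk, hk0, hkr, by rwa [Set.iUnion_singleton_eq_range, ← pathEdges]⟩
end
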